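/- arXiv:math/0309082 — 5 statements merged into one kernel-verified Lean document; each statement's English description precedes it below -/
import Mathlib

section
/- Let R be an associative (not necessarily commutative) ring and let A, B, L⁺, L⁻, F, G ∈ R satisfy [A, L⁺] = {B, L⁻} + F and {A, L⁻} = [B, L⁺] + G. Then [A² − B², L⁺] = [[A, B], L⁻] + {A, F} + {B, G} and [A² − B², L⁻] = [[A, B], L⁺] + [A, G] + [B, F]. -/
/-- **Lemma (Section VIII of Tracy–Widom, "Differential Equations for Dyson Processes").**
In an associative ring, if `[A, L⁺] = {B, L⁻} + F` and `{A, L⁻} = [B, L⁺] + G`, then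
`[A² − B², L⁺] = [[A, B], L⁻] + {A, F} + {B, G}` and
`[A² − B², L⁻] = [[A, B], L⁺] + [A, G] + [B, F]`.
Here `[X, Y] = X*Y − Y*X` and `{X, Y} = X*Y + Y*X`. -/
theorem commutator_anticommutator_lemma {R : Type*} [Ring R]
    (A B Lp Lm F G : R)
    (h1 : A * Lp - Lp * A = (B * Lm + Lm * B) + F)
    (h2 : A * Lm + Lm * A = (B * Lp - Lp * B) + G) :
    (A ^ 2 - B ^ 2) * Lp - Lp * (A ^ 2 - B ^ 2) =
      ((A * B - B * A) * Lm - Lm * (A * B - B * A)) + (A * F + F * A) + (B * G + G * B) ∧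
    (A ^ 2 - B ^ 2) * Lm - Lm * (A ^ 2 - B ^ 2) =
      ((A * B - B * A) * Lp - Lp * (A * B - B * A)) + (A * G - G * A) + (B * F - F * B) := by
  have hF : F = A * Lp - Lp * A - (B * Lm + Lm * B) := by rw [h1]; abel
  have hG : G = A * Lm + Lm * A - (B * Lp - Lp * B) := by rw [h2]; abel
  subst hF hG
  constructor <;> noncomm_ring
end

section
/- Let R be an associative (not necessarily commutative) ring and let A, B, F, G, A', B', F', G', L⁺, L⁻ ∈ R satisfy [A, L⁺] = {B, L⁻} + F, {A, L⁻} = [B, L⁺] + G, [A', L⁺] = {B', L⁻} + F', and {A', L⁻} = [B', L⁺] + G'. Then [AA' + A'A − BB' − B'B, L⁺] = [[A, B'] + [A', B], L⁻] + {A, F'} + {A', F} + {B, G'} + {B', G} and [AA' + A'A − BB' − B'B, L⁻] = [[A, B'] + [A', B], L⁺] + [A, G'] + [A', G] + [B, F'] + [B', F]. -/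
/-- **Polarized commutator–anticommutator lemma (Section VIII of Tracy–Widom).**
If `(A, B, F, G)` and `(A', B', F', G')` each satisfy the hypotheses
`[A, L⁺] = {B, L⁻} + F`, `{A, L⁻} = [B, L⁺] + G` (and the primed versions), then
`[AA' + A'A − BB' − B'B, L⁺] = [[A, B'] + [A', B], L⁻] + {A, F'} + {A', F} + {B, G'} + {B', G}`
and
`[AA' + A'A − BB' − B'B, L⁻] = [[A, B'] + [A', B], L⁺] + [A, G'] + [A', G] + [B, F'] + [B', F]`.
Here `[X, Y] = X*Y − Y*X` and `{X, Y} = X*Y + Y*X`. -/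
theorem polarized_commutator_anticommutator_lemma {R : Type*} [Ring R]
    (A B F G A' B' F' G' Lp Lm : R)
    (h1 : A * Lp - Lp * A = (B * Lm + Lm * B) + F)
    (h2 : A * Lm + Lm * A = (B * Lp - Lp * B) + G)
    (h1' : A' * Lp - Lp * A' = (B' * Lm + Lm * B') + F')
    (h2' : A' * Lm + Lm * A' = (B' * Lp - Lp * B') + G') :
    (A * A' + A' * A - B * B' - B' * B) * Lp - Lp * (A * A' + A' * A - B * B' - B' * B) =
      (((A * B' - B' * A) + (A' * B - B * A')) * Lm
          - Lm * ((A * B' - B' * A) + (A' * B - B * A')))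
        + (A * F' + F' * A) + (A' * F + F * A') + (B * G' + G' * B) + (B' * G + G * B') ∧
    (A * A' + A' * A - B * B' - B' * B) * Lm - Lm * (A * A' + A' * A - B * B' - B' * B) =
      (((A * B' - B' * A) + (A' * B - B * A')) * Lp
          - Lp * ((A * B' - B' * A) + (A' * B - B * A')))
        + (A * G' - G' * A) + (A' * G - G * A') + (B * F' - F' * B) + (B' * F - F * B') := by
  constructor
  · linear_combination (norm := noncomm_ring)
      A * h1' + h1 * A' + A' * h1 + h1' * A + B * h2' + h2 * B' + B' * h2 + h2' * B
  · linear_combination (norm := noncomm_ring)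
      A * h2' - h2 * A' + A' * h2 - h2' * A + B * h1' - h1 * B' + B' * h1 - h1' * B
end

section
/- For all q, q' with 0 < q < 1 and 0 < q' < 1 and all real λ, ν, the function μ ↦ K(q; λ, μ) K(q'; μ, ν) is integrable on ℝ and ∫_ℝ K(q; λ, μ) K(q'; μ, ν) dμ = K(qq'; λ, ν); that is, the Mehler kernels satisfy the semigroup property K(q) ∗ K(q') = K(qq') under kernel composition. -/
/-!
Writing `r = 1 - q²`, `r' = 1 - q'²` and `R = 1 - (qq')²`, the product
`K(q; λ, μ) K(q'; μ, ν)` is a constant times `exp (-p μ² + s μ + d)` with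
`p = 1/r + q'²/r' = R / (r r')`, the last equality being `r' + q'² r = R`. Completing the square
evaluates the Gaussian integral as `√(π / p) · exp (s² / 4p + d)`; the prefactor collapses to
`(π R)^{-1/2}` and the exponent to that of `K(qq'; λ, ν)`.
-/

open MeasureTheory

noncomputable def mehlerK (q lam mu : ℝ) : ℝ :=
  (Real.sqrt (Real.pi * (1 - q ^ 2)))⁻¹ *
    Real.exp (-q ^ 2 * lam ^ 2 / (1 - q ^ 2) - mu ^ 2 / (1 - q ^ 2)
      + 2 * q * lam * mu / (1 - q ^ 2))

section GaussianQuadratic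

variable {p : ℝ} (s d : ℝ)

lemma exp_quadratic_eq_exp_sq_mul (hp : p ≠ 0) (x : ℝ) :
    Real.exp (-p * x ^ 2 + s * x + d)
      = Real.exp (-p * (x - s / (2 * p)) ^ 2) * Real.exp (s ^ 2 / (4 * p) + d) := by
  rw [← Real.exp_add]
  congr 1
  field_simp
  ring

lemma integrable_exp_quadratic (hp : 0 < p) :
    Integrable (fun x : ℝ => Real.exp (-p * x ^ 2 + s * x + d)) := by
  simp_rw [exp_quadratic_eq_exp_sq_mul s d hp.ne']
  exact ((integrable_exp_neg_mul_sq hp).comp_sub_right _).mul_const _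

lemma integral_exp_quadratic (hp : 0 < p) :
    ∫ x : ℝ, Real.exp (-p * x ^ 2 + s * x + d)
      = Real.sqrt (Real.pi / p) * Real.exp (s ^ 2 / (4 * p) + d) := by
  simp_rw [exp_quadratic_eq_exp_sq_mul s d hp.ne']
  rw [integral_mul_const, integral_sub_right_eq_self (fun x => Real.exp (-p * x ^ 2)),
    integral_gaussian]

end GaussianQuadratic

lemma mehlerK_mul_mehlerK {q q' : ℝ} (hq : 1 - q ^ 2 ≠ 0) (hq' : 1 - q' ^ 2 ≠ 0)
    (lam mu nu : ℝ) :
    mehlerK q lam mu * mehlerK q' mu nu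
      = ((Real.sqrt (Real.pi * (1 - q ^ 2)))⁻¹ * (Real.sqrt (Real.pi * (1 - q' ^ 2)))⁻¹) *
        Real.exp (-((1 - (q * q') ^ 2) / ((1 - q ^ 2) * (1 - q' ^ 2))) * mu ^ 2
          + (2 * q * lam / (1 - q ^ 2) + 2 * q' * nu / (1 - q' ^ 2)) * mu
          + (-q ^ 2 * lam ^ 2 / (1 - q ^ 2) - nu ^ 2 / (1 - q' ^ 2))) := by
  rw [mehlerK, mehlerK, mul_mul_mul_comm, ← Real.exp_add]
  congr 2
  field_simp
  ring

lemma inv_sqrt_pi_mul_inv_sqrt_pi_mul_sqrt {a b c : ℝ} (ha : 0 < a) (hb : 0 < b) (hc : 0 < c) :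
    (Real.sqrt (Real.pi * a))⁻¹ * (Real.sqrt (Real.pi * b))⁻¹
        * Real.sqrt (Real.pi / (c / (a * b))) = (Real.sqrt (Real.pi * c))⁻¹ := by
  rw [show Real.pi / (c / (a * b)) = Real.pi * a * (Real.pi * b) / (Real.pi * c) by field_simp,
    Real.sqrt_div' _ (by positivity), Real.sqrt_mul (x := Real.pi * a) (by positivity)]
  have hab : Real.sqrt (Real.pi * a) * Real.sqrt (Real.pi * b) ≠ 0 := by positivity
  rw [← mul_inv, div_eq_mul_inv, ← mul_assoc, inv_mul_cancel₀ hab, one_mul]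

lemma mehler_exponent_complete_square {q q' : ℝ} (hq : 1 - q ^ 2 ≠ 0) (hq' : 1 - q' ^ 2 ≠ 0)
    (hqq' : 1 - (q * q') ^ 2 ≠ 0) (lam nu : ℝ) :
    (2 * q * lam / (1 - q ^ 2) + 2 * q' * nu / (1 - q' ^ 2)) ^ 2
        / (4 * ((1 - (q * q') ^ 2) / ((1 - q ^ 2) * (1 - q' ^ 2))))
        + (-q ^ 2 * lam ^ 2 / (1 - q ^ 2) - nu ^ 2 / (1 - q' ^ 2))
      = -(q * q') ^ 2 * lam ^ 2 / (1 - (q * q') ^ 2) - nu ^ 2 / (1 - (q * q') ^ 2)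
        + 2 * (q * q') * lam * nu / (1 - (q * q') ^ 2) := by
  rw [mul_pow] at hqq' ⊢
  field_simp
  ring

/-- **Semigroup property of the Mehler kernels (Section III of Tracy–Widom, "Differential
Equations for Dyson Processes"): `K(q) ∗ K(q') = K(qq')`.**  For `0 < q, q' < 1` and all
real `λ, ν`, the function `μ ↦ K(q; λ, μ) K(q'; μ, ν)` is integrable on `ℝ` and
`∫ K(q; λ, μ) K(q'; μ, ν) dμ = K(qq'; λ, ν)`. -/
theorem mehler_semigroup (q q' : ℝ) (hq0 : 0 < q) (hq1 : q < 1)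
    (hq'0 : 0 < q') (hq'1 : q' < 1) (lam nu : ℝ) :
    Integrable (fun mu => mehlerK q lam mu * mehlerK q' mu nu) (volume : Measure ℝ) ∧
    ∫ mu : ℝ, mehlerK q lam mu * mehlerK q' mu nu = mehlerK (q * q') lam nu := by
  have one_sub_sq_pos : ∀ x : ℝ, 0 < x → x < 1 → 0 < 1 - x ^ 2 :=
    fun x h0 h1 => by nlinarith
  have hr := one_sub_sq_pos q hq0 hq1
  have hr' := one_sub_sq_pos q' hq'0 hq'1
  have hR := one_sub_sq_pos (q * q') (mul_pos hq0 hq'0)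
    (mul_lt_one_of_nonneg_of_lt_one_left hq0.le hq1 hq'1.le)
  have hp : 0 < (1 - (q * q') ^ 2) / ((1 - q ^ 2) * (1 - q' ^ 2)) := by positivity
  simp_rw [mehlerK_mul_mehlerK hr.ne' hr'.ne' lam _ nu]
  refine ⟨(integrable_exp_quadratic _ _ hp).const_mul _, ?_⟩
  rw [integral_const_mul, integral_exp_quadratic _ _ hp, ← mul_assoc,
    inv_sqrt_pi_mul_inv_sqrt_pi_mul_sqrt hr hr' hR,
    mehler_exponent_complete_square hr.ne' hr'.ne' hR.ne', mehlerK]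
end

section
/- Let m be a positive integer, τ and ξ° real diagonal m×m matrices (with diagonal entries τ_k and ξ_k respectively), Θ the m×m matrix of all ones, and X(s) = ξ° + s·I. Let q, q₁, q̃, r, r_x, r_y be differentiable functions from ℝ to the real m×m matrices satisfying for all s: (i) dq/ds = q₁ − r q; (ii) dq₁/ds = −(r_x + r_y) q + X(s) q + r q₁; (iii) dr/ds = −r² + (r_x + r_y); and (iv) r_x + r_y = −q Θ q̃ + r² + [τ, r]. Then for all s: dr/ds = −q Θ q̃ + [τ, r], and q is twice differentiable with d²q/ds² = X(s) q + 2 q Θ q̃ q − 2 [τ, r] q. (This is the derivation of the ODE system 𝒟²q = ξ q + 2 q Θ q̃ q − 2[τ, r] q and 𝒟r = −q Θ q̃ + [τ, r] for the Airy process from the total system of PDEs, with 𝒟 = Σ_k ∂_k = d/ds after the shift ξ_k ↦ ξ_k + s.) -/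
attribute [local instance] Matrix.normedAddCommGroup Matrix.normedSpace

/-!
Substituting (iv) into (iii) gives the equation for `r` at once. For `q`, differentiate (i)
and insert (ii) and (iii): the terms `r q₁` cancel and `q'' = X q - 2 (r_x + r_y - r²) q`,
into which (iv) is substituted once more.
-/

namespace Matrix

variable {𝕜 𝔸 : Type*} [NontriviallyNormedField 𝕜] [NormedRing 𝔸] [NormedAlgebra 𝕜 𝔸]

theorem hasDerivAt_mul {l m n : Type*} [Fintype l] [Fintype m] [Fintype n]
    {f : 𝕜 → Matrix l m 𝔸} {g : 𝕜 → Matrix m n 𝔸} {f' : Matrix l m 𝔸} {g' : Matrix m n 𝔸}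
    {x : 𝕜} (hf : HasDerivAt f f' x) (hg : HasDerivAt g g' x) :
    HasDerivAt (fun t => f t * g t) (f' * g x + f x * g') x := by
  have hf_entry (i : l) (k : m) : HasDerivAt (fun t => f t i k) (f' i k) x :=
    hasDerivAt_pi.1 (hasDerivAt_pi.1 hf i) k
  have hg_entry (k : m) (j : n) : HasDerivAt (fun t => g t k j) (g' k j) x :=
    hasDerivAt_pi.1 (hasDerivAt_pi.1 hg k) j
  refine hasDerivAt_pi.2 fun i => hasDerivAt_pi.2 fun j => ?_
  simp only [add_apply, mul_apply, ← Finset.sum_add_distrib]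
  exact HasDerivAt.fun_sum fun k _ => (hf_entry i k).fun_mul (hg_entry k j)

theorem hasDerivAt_deriv_of_riccati_system {n : Type*} [Fintype n]
    {q q₁ r S X : 𝕜 → Matrix n n 𝔸}
    (hq : ∀ s, HasDerivAt q (q₁ s - r s * q s) s)
    (hq₁ : ∀ s, HasDerivAt q₁ (-S s * q s + X s * q s + r s * q₁ s) s)
    (hr : ∀ s, HasDerivAt r (-(r s * r s) + S s) s) (s : 𝕜) :
    HasDerivAt (deriv q) (X s * q s - 2 • ((S s - r s * r s) * q s)) s := by
  have hderiv : deriv q = fun t => q₁ t - r t * q t := funext fun t => (hq t).deriv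
  rw [hderiv]
  refine ((hq₁ s).sub (hasDerivAt_mul (hr s) (hq s))).congr_deriv ?_
  rw [two_smul]
  noncomm_ring

end Matrix

theorem airy_process_ode_system_general (m : ℕ)
    (q q₁ qt r rx ry : ℝ → Matrix (Fin m) (Fin m) ℝ)
    (Θ : Matrix (Fin m) (Fin m) ℝ)
    (X : ℝ → Matrix (Fin m) (Fin m) ℝ)
    (τ : Matrix (Fin m) (Fin m) ℝ)
    (hq : ∀ s, HasDerivAt q (q₁ s - r s * q s) s)
    (hq₁ : ∀ s, HasDerivAt q₁ (-(rx s + ry s) * q s + X s * q s + r s * q₁ s) s)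
    (hr : ∀ s, HasDerivAt r (-(r s * r s) + (rx s + ry s)) s)
    (hsum : ∀ s, rx s + ry s = -(q s * Θ * qt s) + r s * r s + (τ * r s - r s * τ)) :
    (∀ s, HasDerivAt r (-(q s * Θ * qt s) + (τ * r s - r s * τ)) s) ∧
    (∀ s, HasDerivAt (deriv q)
      (X s * q s + 2 • (q s * Θ * qt s * q s) - 2 • ((τ * r s - r s * τ) * q s)) s) := by
  refine ⟨fun s => ?_, fun s => ?_⟩
  · refine (hr s).congr_deriv ?_
    rw [hsum s]
    abel
  · have hS : rx s + ry s - r s * r s = -(q s * Θ * qt s) + (τ * r s - r s * τ) := by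
      rw [hsum s]
      abel
    refine (Matrix.hasDerivAt_deriv_of_riccati_system hq hq₁ hr s).congr_deriv ?_
    rw [hS, add_mul, smul_add, neg_mul, smul_neg]
    abel

/-- **Derivation of the ODE system (4.11)–(4.13) for the Airy process from the total
system of PDEs (Section IV of Tracy–Widom, "Differential Equations for Dyson
Processes").**  Let `τ = diag(τ_k)`, `ξ° = diag(ξ_k)`, `Θ` the all-ones matrix and
`X(s) = ξ° + s·I`.  If matrix-valued functions `q, q₁, q̃, r, r_x, r_y` satisfy
(i) `dq/ds = q₁ − r q`, (ii) `dq₁/ds = −(r_x + r_y) q + X(s) q + r q₁`,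
(iii) `dr/ds = −r² + (r_x + r_y)` and (iv) `r_x + r_y = −q Θ q̃ + r² + [τ, r]`, then
`dr/ds = −q Θ q̃ + [τ, r]` and `q` is twice differentiable with
`d²q/ds² = X(s) q + 2 q Θ q̃ q − 2 [τ, r] q`. -/
theorem airy_process_ode_system (m : ℕ) (hm : 0 < m) (τv ξv : Fin m → ℝ)
    (q q₁ qt r rx ry : ℝ → Matrix (Fin m) (Fin m) ℝ)
    (Θ : Matrix (Fin m) (Fin m) ℝ) (hΘ : Θ = Matrix.of fun _ _ => (1 : ℝ))
    (X : ℝ → Matrix (Fin m) (Fin m) ℝ)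
    (hX : ∀ s, X s = Matrix.diagonal ξv + s • (1 : Matrix (Fin m) (Fin m) ℝ))
    (τ : Matrix (Fin m) (Fin m) ℝ) (hτ : τ = Matrix.diagonal τv)
    (hq : ∀ s, HasDerivAt q (q₁ s - r s * q s) s)
    (hq₁ : ∀ s, HasDerivAt q₁ (-(rx s + ry s) * q s + X s * q s + r s * q₁ s) s)
    (hr : ∀ s, HasDerivAt r (-(r s * r s) + (rx s + ry s)) s)
    (hsum : ∀ s, rx s + ry s = -(q s * Θ * qt s) + r s * r s + (τ * r s - r s * τ)) :
    (∀ s, HasDerivAt r (-(q s * Θ * qt s) + (τ * r s - r s * τ)) s) ∧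
    (∀ s, HasDerivAt (deriv q)
      (X s * q s + 2 • (q s * Θ * qt s * q s) - 2 • ((τ * r s - r s * τ) * q s)) s) :=
  airy_process_ode_system_general m q q₁ qt r rx ry Θ X τ hq hq₁ hr hsum
end

section
/- Let ν be a real constant and let r, p, q : ℝ → ℝ be sufficiently differentiable functions satisfying for all x: r'(x) = −p(x)q(x), q''(x) = (x² − ν − 1) q(x) + 2 q(x)² p(x), p''(x) = (x² − ν + 1) p(x) + 2 p(x)² q(x), and p(x)q'(x) − q(x)p'(x) = 2 r(x). Then r is four times differentiable and satisfies for all x: r''''(x) = 4(x² − ν) r''(x) + 4x r'(x) − 12 r'(x) r''(x) − 4 r(x). (With ν = 2n this is the fourth-order equation for r = R(ξ, ξ) obtained from the m = 1 case of the extended Hermite system, whose first integral r''' = 4(ξ² − 2n)r' − 4ξr − 6r'² integrates to Painlevé IV.) -/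
/-!
Differentiating `r' = -pq` and eliminating `p''`, `q''` with the system gives
`r''' = 2Vr' - 4r'² - 2p'q'` for the potential `V = x² - ν`. The only term not yet expressed
through `r` is `p'q'`; its derivative is `2r + 2r'r'' - Vr''`, by the system together with
the Wronskian relation `pq' - qp' = 2r`, which closes the equation at fourth order.
-/

namespace HermiteSystem

variable {V V' r p q : ℝ → ℝ}

theorem hasDerivAt_deriv (hpd : ∀ x, DifferentiableAt ℝ p x)
    (hqd : ∀ x, DifferentiableAt ℝ q x) (hr : ∀ x, HasDerivAt r (-(p x * q x)) x) (x : ℝ) :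
    HasDerivAt (deriv r) (-(deriv p x * q x + p x * deriv q x)) x := by
  rw [show deriv r = fun y => -(p y * q y) from funext fun y => (hr y).deriv]
  exact ((hpd x).hasDerivAt.mul (hqd x).hasDerivAt).neg

theorem hasDerivAt_deriv_deriv (hpd : ∀ x, DifferentiableAt ℝ p x)
    (hqd : ∀ x, DifferentiableAt ℝ q x) (hr : ∀ x, HasDerivAt r (-(p x * q x)) x)
    (hq : ∀ x, HasDerivAt (deriv q) ((V x - 1) * q x + 2 * q x ^ 2 * p x) x)
    (hp : ∀ x, HasDerivAt (deriv p) ((V x + 1) * p x + 2 * p x ^ 2 * q x) x) (x : ℝ) :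
    HasDerivAt (deriv (deriv r))
      (2 * V x * deriv r x - 4 * deriv r x ^ 2 - 2 * (deriv p x * deriv q x)) x := by
  rw [show deriv (deriv r) = fun y => -(deriv p y * q y + p y * deriv q y) from
    funext fun y => (hasDerivAt_deriv hpd hqd hr y).deriv]
  refine (((hp x).mul (hqd x).hasDerivAt).add ((hpd x).hasDerivAt.mul (hq x))).neg.congr_deriv ?_
  rw [(hr x).deriv]
  ring

theorem hasDerivAt_deriv_mul_deriv (hpd : ∀ x, DifferentiableAt ℝ p x)
    (hqd : ∀ x, DifferentiableAt ℝ q x) (hr : ∀ x, HasDerivAt r (-(p x * q x)) x)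
    (hq : ∀ x, HasDerivAt (deriv q) ((V x - 1) * q x + 2 * q x ^ 2 * p x) x)
    (hp : ∀ x, HasDerivAt (deriv p) ((V x + 1) * p x + 2 * p x ^ 2 * q x) x)
    (hw : ∀ x, p x * deriv q x - q x * deriv p x = 2 * r x) (x : ℝ) :
    HasDerivAt (fun y => deriv p y * deriv q y)
      (2 * r x + 2 * deriv r x * deriv (deriv r) x - V x * deriv (deriv r) x) x := by
  refine ((hp x).mul (hq x)).congr_deriv ?_
  rw [(hasDerivAt_deriv hpd hqd hr x).deriv, (hr x).deriv]
  linear_combination hw x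

theorem hasDerivAt_deriv_deriv_deriv (hV : ∀ x, HasDerivAt V (V' x) x)
    (hpd : ∀ x, DifferentiableAt ℝ p x)
    (hqd : ∀ x, DifferentiableAt ℝ q x) (hr : ∀ x, HasDerivAt r (-(p x * q x)) x)
    (hq : ∀ x, HasDerivAt (deriv q) ((V x - 1) * q x + 2 * q x ^ 2 * p x) x)
    (hp : ∀ x, HasDerivAt (deriv p) ((V x + 1) * p x + 2 * p x ^ 2 * q x) x)
    (hw : ∀ x, p x * deriv q x - q x * deriv p x = 2 * r x) (x : ℝ) :
    HasDerivAt (deriv (deriv (deriv r)))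
      (4 * V x * deriv (deriv r) x + 2 * V' x * deriv r x
        - 12 * deriv r x * deriv (deriv r) x - 4 * r x) x := by
  have hr' := fun y => hasDerivAt_deriv hpd hqd hr y
  rw [show deriv (deriv (deriv r)) = _ from
    funext fun y => (hasDerivAt_deriv_deriv hpd hqd hr hq hp y).deriv]
  refine ((((hV x).const_mul 2).mul (hr' x).differentiableAt.hasDerivAt).sub
    (((hr' x).differentiableAt.hasDerivAt.pow 2).const_mul 4)).sub
    ((hasDerivAt_deriv_mul_deriv hpd hqd hr hq hp hw x).const_mul 2) |>.congr_deriv ?_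
  simp only [Nat.cast_ofNat]
  ring

end HermiteSystem

/-- **Fourth-order ODE for `r` in the `m = 1` Hermite case (Section V of Tracy–Widom,
"Differential Equations for Dyson Processes").**  If
`r' = −pq`, `q'' = (x² − ν − 1)q + 2q²p`, `p'' = (x² − ν + 1)p + 2p²q` and
`pq' − qp' = 2r`, then `r` is four times differentiable and
`r'''' = 4(x² − ν)r'' + 4x r' − 12 r' r'' − 4r`.
(With `ν = 2n` this is the equation whose first integral
`r''' = 4(ξ² − 2n)r' − 4ξr − 6r'²` integrates to Painlevé IV.) -/
theorem hermite_m1_fourth_order_ode (ν : ℝ) (r p q : ℝ → ℝ)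
    (hqd : ∀ x, DifferentiableAt ℝ q x)
    (hpd : ∀ x, DifferentiableAt ℝ p x)
    (hr : ∀ x, HasDerivAt r (-(p x * q x)) x)
    (hq : ∀ x, HasDerivAt (deriv q) ((x ^ 2 - ν - 1) * q x + 2 * q x ^ 2 * p x) x)
    (hp : ∀ x, HasDerivAt (deriv p) ((x ^ 2 - ν + 1) * p x + 2 * p x ^ 2 * q x) x)
    (hw : ∀ x, p x * deriv q x - q x * deriv p x = 2 * r x) :
    (∀ x, DifferentiableAt ℝ (deriv r) x) ∧
    (∀ x, DifferentiableAt ℝ (deriv (deriv r)) x) ∧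
    (∀ x, DifferentiableAt ℝ (deriv (deriv (deriv r))) x) ∧
    (∀ x, deriv (deriv (deriv (deriv r))) x
      = 4 * (x ^ 2 - ν) * deriv (deriv r) x + 4 * x * deriv r x
        - 12 * deriv r x * deriv (deriv r) x - 4 * r x) := by
  have hV (x : ℝ) : HasDerivAt (fun y => y ^ 2 - ν) (2 * x) x := by
    simpa using (hasDerivAt_pow 2 x).sub_const ν
  have h4 := HermiteSystem.hasDerivAt_deriv_deriv_deriv hV hpd hqd hr hq hp hw
  refine ⟨fun x => (HermiteSystem.hasDerivAt_deriv hpd hqd hr x).differentiableAt,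
    fun x => (HermiteSystem.hasDerivAt_deriv_deriv hpd hqd hr hq hp x).differentiableAt,
    fun x => (h4 x).differentiableAt, fun x => ?_⟩
  rw [(h4 x).deriv]
  ring
end
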